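/- Let $\alpha\in(0,2)$, $c^+,c^-\geq 0$ with $c^++c^->0$, $a=(c^+-c^-)/(1-\alpha)$ if $\alpha\neq 1$ (and $a=0$, $c^+=c^-$ if $\alpha=1$), and $\nu(y)=c^+y^{-\alpha-1}\mathbf{1}_{\{y>0\}}+c^-|y|^{-\alpha-1}\mathbf{1}_{\{y<0\}}$. Then for every $x\in\mathbb{R}\setminus\{0\}$, $\int_0^\infty (u-1)\big(\mathbf{1}_{\{|u-1|<1\}}-\mathbf{1}_{\{|x(u-1)|<1\}}\big)\,\nu(\mathrm{sgn}(x)(u-1))\,du \; - \; \int_{-\infty}^0 (u-1)\mathbf{1}_{\{|x(u-1)|<1\}}\,\nu(\mathrm{sgn}(x)(u-1))\,du \; = \; \mathrm{sgn}(x)\,a\,(1-|x|^{\alpha-1})$. -/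

import Mathlib

open MeasureTheory Real Set

/-!
After the substitution `t = u - 1`, the second integral runs over `t < -1`, where the truncation
`|t| < 1` is inactive, so the two integrals merge into the single integral over `ℝ` of
`t (1_{|t| < 1} - 1_{|t| < 1/|x|}) ν(t)` (with `c⁺, c⁻` swapped when `x < 0`). Since
`t ν(t) = ± c^± |t|^(-α)`, this integrand is `c⁺ φ(t) - c⁻ φ(-t)` with
`φ = 1_{(0,1)} t^(-α) - 1_{(0,1/|x|)} t^(-α)`, which lives between `1` and `1/|x|`, away from the
singularity at `0`; hence the integral is
`(c⁺ - c⁻) ∫_{1/|x|}^1 t^(-α) dt = (c⁺ - c⁻) (1 - |x|^(α-1)) / (1 - α)`.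
-/

noncomputable def truncationGap (f : ℝ → ℝ) (a b : ℝ) : ℝ → ℝ :=
  (Iio b).indicator f - (Iio a).indicator f

section TruncationGap

variable {f : ℝ → ℝ} {a b : ℝ}

lemma truncationGap_eq_indicator_Ico_sub (f : ℝ → ℝ) (a b : ℝ) :
    truncationGap f a b = (Ico a b).indicator f - (Ico b a).indicator f := by
  ext t
  simp only [truncationGap, Pi.sub_apply, indicator_apply, mem_Iio, mem_Ico]
  split_ifs <;> grind

lemma truncationGap_of_lt {t : ℝ} (ha : t < a) (hb : t < b) : truncationGap f a b t = 0 := by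
  simp [truncationGap, ha, hb]

lemma IntervalIntegrable.integrableOn_Ico (hf : IntervalIntegrable f volume a b) :
    IntegrableOn f (Ico a b) ∧ IntegrableOn f (Ico b a) :=
  ⟨hf.1.congr_set_ae Ico_ae_eq_Ioc, hf.2.congr_set_ae Ico_ae_eq_Ioc⟩

lemma integrable_truncationGap (hf : IntervalIntegrable f volume a b) :
    Integrable (truncationGap f a b) := by
  rw [truncationGap_eq_indicator_Ico_sub]
  exact (hf.integrableOn_Ico.1.integrable_indicator measurableSet_Ico).sub
    (hf.integrableOn_Ico.2.integrable_indicator measurableSet_Ico)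

lemma integral_truncationGap (hf : IntervalIntegrable f volume a b) :
    ∫ t, truncationGap f a b t = ∫ t in a..b, f t := by
  rw [truncationGap_eq_indicator_Ico_sub, Pi.sub_def, integral_sub
    (hf.integrableOn_Ico.1.integrable_indicator measurableSet_Ico)
    (hf.integrableOn_Ico.2.integrable_indicator measurableSet_Ico),
    integral_indicator measurableSet_Ico, integral_indicator measurableSet_Ico,
    integral_Ico_eq_integral_Ioc, integral_Ico_eq_integral_Ioc]
  rfl

end TruncationGap

lemma mul_rpow_neg_sub_one {s : ℝ} (hs : 0 < s) (α : ℝ) : s * s ^ (-α - 1) = s ^ (-α) := by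
  rw [rpow_sub_one hs.ne', mul_div_cancel₀ _ hs.ne']

noncomputable def stableDensity (α cp cm : ℝ) (y : ℝ) : ℝ :=
  if 0 < y then cp * y ^ (-α - 1) else if y < 0 then cm * |y| ^ (-α - 1) else 0

section StableDensity

variable {α cp cm : ℝ}

lemma stableDensity_neg (y : ℝ) : stableDensity α cp cm (-y) = stableDensity α cm cp y := by
  rcases lt_trichotomy y 0 with hy | rfl | hy
  · simp [stableDensity, hy, hy.not_gt, abs_of_neg hy]
  · simp [stableDensity]
  · simp [stableDensity, hy, hy.not_gt, abs_of_pos hy]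

lemma mul_stableDensity_truncation_eq {x : ℝ} (hx : 0 < x) (t : ℝ) :
    t * ((if |t| < 1 then (1:ℝ) else 0) - (if |x * t| < 1 then (1:ℝ) else 0))
        * stableDensity α cp cm t
      = cp * truncationGap (· ^ (-α)) x⁻¹ 1 t
        - cm * truncationGap (· ^ (-α)) x⁻¹ 1 (-t) := by
  have hx' : 0 < x⁻¹ := inv_pos.2 hx
  have on_pos : ∀ s, 0 < s →
      s * ((if |s| < 1 then (1:ℝ) else 0) - (if |x * s| < 1 then (1:ℝ) else 0)) * s ^ (-α - 1)
        = truncationGap (· ^ (-α)) x⁻¹ 1 s := fun s hs => by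
    have hxs : |x * s| < 1 ↔ s < x⁻¹ := by
      rw [abs_of_pos (mul_pos hx hs), inv_eq_one_div, lt_div_iff₀' hx]
    rw [mul_right_comm, mul_rpow_neg_sub_one hs]
    simp only [truncationGap, Pi.sub_apply, indicator_apply, mem_Iio, abs_of_pos hs, hxs]
    split_ifs <;> ring
  rcases lt_trichotomy t 0 with ht | rfl | ht
  · rw [truncationGap_of_lt (by linarith) (by linarith), ← on_pos (-t) (neg_pos.2 ht)]
    simp only [stableDensity, if_neg ht.not_gt, if_pos ht, abs_neg, mul_neg, abs_of_neg ht]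
    ring
  · simp [stableDensity, truncationGap_of_lt hx' one_pos]
  · rw [truncationGap_of_lt (t := -t) (by linarith) (by linarith), ← on_pos t ht]
    simp only [stableDensity, if_pos ht]
    ring

end StableDensity

lemma integral_truncation_change {α cp cm x : ℝ} (hx : 0 < x) :
    (∫ u in Ioi (0:ℝ), (u - 1) * ((if |u - 1| < 1 then (1:ℝ) else 0)
          - (if |x * (u - 1)| < 1 then (1:ℝ) else 0)) * stableDensity α cp cm (u - 1))
      - (∫ u in Iio (0:ℝ),
          (u - 1) * (if |x * (u - 1)| < 1 then (1:ℝ) else 0) * stableDensity α cp cm (u - 1))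
      = (cp - cm) * ∫ t in x⁻¹..1, t ^ (-α) := by
  set g : ℝ → ℝ := fun t => t * ((if |t| < 1 then (1:ℝ) else 0)
    - (if |x * t| < 1 then (1:ℝ) else 0)) * stableDensity α cp cm t
  have hg : g = fun t => cp * truncationGap (· ^ (-α)) x⁻¹ 1 t
      - cm * truncationGap (· ^ (-α)) x⁻¹ 1 (-t) :=
    funext (mul_stableDensity_truncation_eq hx)
  have hf : IntervalIntegrable (· ^ (-α)) volume x⁻¹ 1 :=
    intervalIntegral.intervalIntegrable_rpow (Or.inr (notMem_uIcc_of_lt (inv_pos.2 hx) one_pos))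
  have hgap := integrable_truncationGap hf
  have hg_int : Integrable g := hg ▸ (hgap.const_mul cp).sub (hgap.comp_neg.const_mul cm)
  have hg_integral : ∫ t, g t = (cp - cm) * ∫ t in x⁻¹..1, t ^ (-α) := by
    rw [hg, integral_sub (hgap.const_mul cp) (hgap.comp_neg.const_mul cm), integral_const_mul,
      integral_const_mul, integral_neg_eq_self, integral_truncationGap hf]
    ring
  have tail : ∀ u ∈ Iio (0:ℝ),
      (u - 1) * (if |x * (u - 1)| < 1 then (1:ℝ) else 0) * stableDensity α cp cm (u - 1)
        = -g (u - 1) := fun u hu => by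
    have hu' : ¬ |u - 1| < 1 := by
      rw [abs_of_neg (by linarith [mem_Iio.1 hu])]; linarith [mem_Iio.1 hu]
    simp only [g, if_neg hu']
    ring
  rw [setIntegral_congr_fun measurableSet_Iio tail, integral_neg, sub_neg_eq_add,
    ← integral_Iic_eq_integral_Iio, ← compl_Ioi,
    integral_add_compl measurableSet_Ioi (hg_int.comp_sub_right 1),
    integral_sub_right_eq_self, hg_integral]

lemma integral_truncation_change_sign {α cp cm x : ℝ} (hx : x ≠ 0) :
    (∫ u in Ioi (0:ℝ), (u - 1) * ((if |u - 1| < 1 then (1:ℝ) else 0)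
          - (if |x * (u - 1)| < 1 then (1:ℝ) else 0)) * stableDensity α cp cm (sign x * (u - 1)))
      - (∫ u in Iio (0:ℝ), (u - 1) * (if |x * (u - 1)| < 1 then (1:ℝ) else 0)
          * stableDensity α cp cm (sign x * (u - 1)))
      = sign x * (cp - cm) * ∫ t in |x|⁻¹..1, t ^ (-α) := by
  rcases hx.lt_or_gt with hx | hx
  · have h := integral_truncation_change (α := α) (cp := cm) (cm := cp) (neg_pos.2 hx)
    simp only [neg_mul, abs_neg] at h
    simp only [sign_of_neg hx, abs_of_neg hx, neg_one_mul, stableDensity_neg, h]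
    ring
  · simpa only [sign_of_pos hx, abs_of_pos hx, one_mul] using integral_truncation_change hx

lemma integral_rpow_neg_inv_one {α m : ℝ} (hm : 0 < m) (hα : α ≠ 1) :
    ∫ t in m⁻¹..1, t ^ (-α) = (1 - m ^ (α - 1)) / (1 - α) := by
  have hα' : -α ≠ -1 := by contrapose! hα; linarith
  rw [integral_rpow (Or.inr ⟨hα', notMem_uIcc_of_lt (inv_pos.2 hm) one_pos⟩),
    one_rpow, inv_rpow hm.le, ← rpow_neg hm.le, show -(-α + 1) = α - 1 by ring,
    show -α + 1 = 1 - α by ring]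

theorem stmt1_general (α cp cm a : ℝ)
    (ha1 : α ≠ 1 → a = (cp - cm) / (1 - α))
    (ha2 : α = 1 → a = 0 ∧ cp = cm)
    (ν : ℝ → ℝ)
    (hν : ∀ y, ν y = if 0 < y then cp * y ^ (-α - 1)
      else if y < 0 then cm * |y| ^ (-α - 1) else 0)
    (x : ℝ) (hx : x ≠ 0) :
    (∫ u in Set.Ioi (0:ℝ),
        (u - 1) * ((if |u - 1| < 1 then (1:ℝ) else 0)
          - (if |x * (u - 1)| < 1 then (1:ℝ) else 0)) * ν (Real.sign x * (u - 1)))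
      - (∫ u in Set.Iio (0:ℝ),
        (u - 1) * (if |x * (u - 1)| < 1 then (1:ℝ) else 0) * ν (Real.sign x * (u - 1)))
      = Real.sign x * a * (1 - |x| ^ (α - 1)) := by
  obtain rfl : ν = stableDensity α cp cm := funext hν
  rw [integral_truncation_change_sign hx]
  rcases eq_or_ne α 1 with rfl | hα
  · obtain ⟨rfl, rfl⟩ := ha2 rfl
    simp
  · rw [integral_rpow_neg_inv_one (abs_pos.2 hx) hα, ha1 hα]
    ring

/-- Lemma 3.2 of the paper: change-of-truncation identity for the Lévy measure of an
α-stable process. -/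
theorem stmt1 (α cp cm a : ℝ) (hα : α ∈ Set.Ioo (0:ℝ) 2)
    (hcp : 0 ≤ cp) (hcm : 0 ≤ cm) (hsum : 0 < cp + cm)
    (ha1 : α ≠ 1 → a = (cp - cm) / (1 - α))
    (ha2 : α = 1 → a = 0 ∧ cp = cm)
    (ν : ℝ → ℝ)
    (hν : ∀ y, ν y = if 0 < y then cp * y ^ (-α - 1)
      else if y < 0 then cm * |y| ^ (-α - 1) else 0)
    (x : ℝ) (hx : x ≠ 0) :
    (∫ u in Set.Ioi (0:ℝ),
        (u - 1) * ((if |u - 1| < 1 then (1:ℝ) else 0)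
          - (if |x * (u - 1)| < 1 then (1:ℝ) else 0)) * ν (Real.sign x * (u - 1)))
      - (∫ u in Set.Iio (0:ℝ),
        (u - 1) * (if |x * (u - 1)| < 1 then (1:ℝ) else 0) * ν (Real.sign x * (u - 1)))
      = Real.sign x * a * (1 - |x| ^ (α - 1)) :=
  stmt1_general α cp cm a ha1 ha2 ν hν x hx
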